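/- Let A be a complex Banach algebra possessing a contractive approximate identity, and let H be a Hilbert A-module, with representation π_H : A → B(H), which is a generator for the category of Hilbert A-modules. Then the double commutant π_H(A)'' equals the closure of π_H(A) in the weak operator topology on B(H). -/

import Mathlib

noncomputable section

open Filter

open scoped ENNReal

/-- A contractive approximate identity for a (possibly non-unital) normed algebra `A`:
a net `(e i)`, indexed by a nontrivial filter, with `‖e i‖ ≤ 1` for all `i`, such that
`e i * a → a` and `a * e i → a` in norm for every `a ∈ A`. -/
def HasCAI (A : Type) [NonUnitalNormedRing A] : Prop :=
  ∃ (ι : Type) (l : Filter ι) (e : ι → A), l.NeBot ∧ (∀ i, ‖e i‖ ≤ 1) ∧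
    ∀ a : A, Tendsto (fun i => e i * a) l (nhds a) ∧ Tendsto (fun i => a * e i) l (nhds a)

variable (A : Type) [NonUnitalNormedRing A] [NormedSpace ℂ A] [IsScalarTower ℂ A A]
  [SMulCommClass ℂ A A]

/-- A Hilbert `A`-module structure on the Hilbert space `K`: a contractive algebra
homomorphism `π : A → B(K)` which is nondegenerate, i.e. the linear span of
`{π a x : a ∈ A, x ∈ K}` is dense in `K`. -/
def IsHilbertRep {K : Type} [NormedAddCommGroup K] [InnerProductSpace ℂ K] [CompleteSpace K]
    (π : A →ₙₐ[ℂ] (K →L[ℂ] K)) : Prop :=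
  (∀ a : A, ‖π a‖ ≤ ‖a‖) ∧
  Dense ((Submodule.span ℂ {x : K | ∃ (a : A) (y : K), π a y = x} : Submodule ℂ K) : Set K)

/-- A bounded `A`-module map between Hilbert `A`-modules. -/
def IsModuleMap {K L : Type} [NormedAddCommGroup K] [InnerProductSpace ℂ K]
    [NormedAddCommGroup L] [InnerProductSpace ℂ L]
    (πK : A →ₙₐ[ℂ] (K →L[ℂ] K)) (πL : A →ₙₐ[ℂ] (L →L[ℂ] L)) (T : K →L[ℂ] L) : Prop :=
  ∀ (a : A) (x : K), T (πK a x) = πL a (T x)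

/-- `H` is a generator for the category of Hilbert `A`-modules: for all Hilbert
`A`-modules `K`, `L` and every nonzero bounded `A`-module map `R : K → L` there is a
bounded `A`-module map `V : H → K` with `R ∘ V ≠ 0`. -/
def IsGenerator {H : Type} [NormedAddCommGroup H] [InnerProductSpace ℂ H] [CompleteSpace H]
    (πH : A →ₙₐ[ℂ] (H →L[ℂ] H)) : Prop :=
  ∀ (K L : Type) [NormedAddCommGroup K] [InnerProductSpace ℂ K] [CompleteSpace K]
    [NormedAddCommGroup L] [InnerProductSpace ℂ L] [CompleteSpace L],
    ∀ (πK : A →ₙₐ[ℂ] (K →L[ℂ] K)) (πL : A →ₙₐ[ℂ] (L →L[ℂ] L)),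
      IsHilbertRep A πK → IsHilbertRep A πL →
      ∀ R : K →L[ℂ] L, IsModuleMap A πK πL R → R ≠ 0 →
        ∃ V : H →L[ℂ] K, IsModuleMap A πH πK V ∧ R.comp V ≠ 0

/-- The closure of a set of operators in the weak operator topology on `B(K)`. -/
def wotClosure {K : Type} [NormedAddCommGroup K] [InnerProductSpace ℂ K]
    (S : Set (K →L[ℂ] K)) : Set (K →L[ℂ] K) :=
  (ContinuousLinearMapWOT.ofCLM : (K →L[ℂ] K) → (K →WOT[ℂ] K)) ⁻¹'
    closure (ContinuousLinearMapWOT.ofCLM '' S)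

/-!
Commutants are closed in the weak operator topology, so the WOT closure of `π(A)` lies in
`π(A)''`. Conversely, let `T ∈ π(A)''`, let `n` be finite and `ξ ∈ Hⁿ`. In the presence of a
contractive approximate identity `(eᵢ)`, nondegeneracy of a contractive representation amounts
to `π(eᵢ) → 1` strongly; hence restrictions to closed invariant subspaces, compressions to their
orthogonal complements and finite inflations of Hilbert `A`-modules are again Hilbert
`A`-modules, and the cyclic subspace `M = closure (π⁽ⁿ⁾(A) ξ)` contains `ξ`. Since `H` is a
generator, the ranges of module maps `H → M` span a dense subspace of `M`: otherwise the
orthogonal projection onto the complement of their closed span would be a nonzero module map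
(into the compression) annihilated by all of them. The components of a module map `V : H → Hⁿ`
commute with `π(A)`, so `T⁽ⁿ⁾ V = V T`; therefore `T⁽ⁿ⁾` maps `M` into itself, and `T⁽ⁿ⁾ ξ ∈ M`
says that `π(A)` approximates `T` simultaneously on the components of `ξ`.
-/

open Topology

variable {A}

structure IsContractiveLeftApproxUnit {R : Type*} [NonUnitalNormedRing R] {ι : Type*}
    (l : Filter ι) (e : ι → R) : Prop where
  norm_le_one : ∀ i, ‖e i‖ ≤ 1
  tendsto_mul : ∀ a : R, Tendsto (fun i => e i * a) l (𝓝 a)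

section HilbertModule

omit [IsScalarTower ℂ A A] [SMulCommClass ℂ A A]

variable {K : Type} [NormedAddCommGroup K] [InnerProductSpace ℂ K]
  {π : A →ₙₐ[ℂ] (K →L[ℂ] K)} {ι : Type} {l : Filter ι} {e : ι → A}

theorem IsContractiveLeftApproxUnit.isHilbertRep_iff [CompleteSpace K] [l.NeBot]
    (he : IsContractiveLeftApproxUnit l e) :
    IsHilbertRep A π ↔ (∀ a, ‖π a‖ ≤ ‖a‖) ∧ ∀ z, Tendsto (fun i => π (e i) z) l (𝓝 z) := by
  refine ⟨fun ⟨hπ, hdense⟩ => ⟨hπ, fun z => ?_⟩, fun ⟨hπ, htendsto⟩ => ⟨hπ, fun z => ?_⟩⟩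
  · have hclosed : IsClosed {z : K | Tendsto (fun i => π (e i) z) l (𝓝 z)} :=
      (LipschitzWith.uniformEquicontinuous _ 1 fun i =>
        ContinuousLinearMap.lipschitzWith_of_opNorm_le ((hπ _).trans (he.norm_le_one i))
        ).equicontinuous.isClosed_setOfPred_tendsto continuous_id
    refine hclosed.closure_subset_iff.2 (fun z hz => ?_) (hdense z)
    induction hz using Submodule.span_induction with
    | mem _ h =>
      obtain ⟨a, y, rfl⟩ := h
      have hcont : Continuous fun b : A => π b y :=
        (continuous_eval_const y).comp
          (AddMonoidHomClass.continuous_of_bound π 1 (by simpa using hπ))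
      simpa only [Set.mem_ofPred_eq, ← mul_apply_eq_comp, ← map_mul, Function.comp_def] using
        (hcont.tendsto a).comp (he.tendsto_mul a)
    | zero => simp
    | add _ _ _ _ h₁ h₂ => simpa using h₁.add h₂
    | smul c _ _ h => simpa using h.const_smul c
  · exact mem_closure_of_tendsto (htendsto z)
      (Eventually.of_forall fun i => Submodule.subset_span ⟨e i, z, rfl⟩)

variable (π) in
def restrictRep (S : Submodule ℂ K) (hS : ∀ a, Set.MapsTo (π a) S S) :
    A →ₙₐ[ℂ] (S →L[ℂ] S) where
  toFun a := (π a).restrict fun _ hx => hS a hx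
  map_smul' c a := by ext; simp
  map_zero' := by ext; simp
  map_add' a b := by ext; simp
  map_mul' a b := by ext; simp

theorem IsHilbertRep.restrict [CompleteSpace K] [l.NeBot] (hπ : IsHilbertRep A π)
    (he : IsContractiveLeftApproxUnit l e) (S : Submodule ℂ K) [CompleteSpace S]
    (hS : ∀ a, Set.MapsTo (π a) S S) : IsHilbertRep A (restrictRep π S hS) := by
  rw [he.isHilbertRep_iff] at hπ ⊢
  refine ⟨fun a => ?_, fun z => tendsto_subtype_rng.2 (hπ.2 z)⟩
  refine ContinuousLinearMap.opNorm_le_bound _ (norm_nonneg a) fun x => ?_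
  calc ‖restrictRep π S hS a x‖ = ‖π a x‖ := rfl
    _ ≤ ‖a‖ * ‖x‖ := (π a).le_of_opNorm_le (hπ.1 a) x

theorem Submodule.orthogonalProjectionOnto_orthogonal_apply_of_mapsTo {𝕜 E : Type*} [RCLike 𝕜]
    [NormedAddCommGroup E] [InnerProductSpace 𝕜 E] {S : Submodule 𝕜 E} [S.HasOrthogonalProjection]
    {T : E →L[𝕜] E} (hT : Set.MapsTo T S S) (x : E) :
    Sᗮ.orthogonalProjectionOnto (T x) =
      Sᗮ.orthogonalProjectionOnto (T (Sᗮ.orthogonalProjectionOnto x)) := by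
  conv_lhs => rw [← S.starProjection_add_starProjection_orthogonal x, map_add, map_add,
    orthogonalProjectionOnto_eq_zero_iff.2
      (S.le_orthogonal_orthogonal (hT (S.starProjection_apply_mem x))), zero_add]
  rfl

-- `Sᗮ` need not be invariant, as `π(A)` is not self-adjoint; multiplicativity of the compression
-- only uses the invariance of `S`.
variable (π) in
def compressRep (S : Submodule ℂ K) [S.HasOrthogonalProjection] (hS : ∀ a, Set.MapsTo (π a) S S) :
    A →ₙₐ[ℂ] (Sᗮ →L[ℂ] Sᗮ) where
  toFun a := Sᗮ.orthogonalProjectionOnto ∘L π a ∘L Sᗮ.subtypeL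
  map_smul' c a := by ext; simp
  map_zero' := by ext; simp
  map_add' a b := by ext; simp
  map_mul' a b := ContinuousLinearMap.ext fun x => by
    simpa [map_mul] using
      Submodule.orthogonalProjectionOnto_orthogonal_apply_of_mapsTo (hS a) (π b x)

@[simp]
theorem compressRep_apply (S : Submodule ℂ K) [S.HasOrthogonalProjection]
    (hS : ∀ a, Set.MapsTo (π a) S S) (a : A) (x : Sᗮ) :
    compressRep π S hS a x = Sᗮ.orthogonalProjectionOnto (π a x) :=
  rfl

theorem isModuleMap_orthogonalProjectionOnto_compressRep (S : Submodule ℂ K)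
    [S.HasOrthogonalProjection] (hS : ∀ a, Set.MapsTo (π a) S S) :
    IsModuleMap A π (compressRep π S hS) Sᗮ.orthogonalProjectionOnto := fun a x => by
  rw [compressRep_apply]
  exact Submodule.orthogonalProjectionOnto_orthogonal_apply_of_mapsTo (hS a) x

theorem IsHilbertRep.compress [CompleteSpace K] [l.NeBot] (hπ : IsHilbertRep A π)
    (he : IsContractiveLeftApproxUnit l e) (S : Submodule ℂ K) [S.HasOrthogonalProjection]
    (hS : ∀ a, Set.MapsTo (π a) S S) : IsHilbertRep A (compressRep π S hS) := by
  rw [he.isHilbertRep_iff] at hπ ⊢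
  refine ⟨fun a => ContinuousLinearMap.opNorm_le_bound _ (norm_nonneg a) fun x => ?_, fun z => ?_⟩
  · rw [compressRep_apply]
    exact (Sᗮ.norm_orthogonalProjectionOnto_apply_le _).trans ((π a).le_of_opNorm_le (hπ.1 a) x)
  · have := (Sᗮ.orthogonalProjectionOnto.continuous.tendsto _).comp (hπ.2 z)
    rwa [Submodule.orthogonalProjectionOnto_mem_subspace_eq_self] at this

section Inflation

variable {𝕜 E : Type*} [NontriviallyNormedField 𝕜] [NormedAddCommGroup E] [NormedSpace 𝕜 E]
  (n : Type*) [Fintype n]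

def inflation (T : E →L[𝕜] E) : PiLp 2 (fun _ : n => E) →L[𝕜] PiLp 2 (fun _ : n => E) :=
  LinearMap.mkContinuous
    { toFun := fun z => WithLp.toLp 2 fun j => T (z j)
      map_add' := fun z w => PiLp.ext fun j => map_add T _ _
      map_smul' := fun c z => PiLp.ext fun j => map_smul T c _ }
    ‖T‖ fun z => by
      refine (pow_le_pow_iff_left₀ (norm_nonneg _) (by positivity) two_ne_zero).1 ?_
      simp only [LinearMap.coe_mk, AddHom.coe_mk, mul_pow, PiLp.norm_sq_eq_of_L2, Finset.mul_sum]
      exact Finset.sum_le_sum fun j _ => by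
        rw [← mul_pow]; exact pow_le_pow_left₀ (norm_nonneg _) (T.le_opNorm _) 2

@[simp]
theorem inflation_apply (T : E →L[𝕜] E) (z : PiLp 2 (fun _ : n => E)) (j : n) :
    inflation n T z j = T (z j) :=
  rfl

theorem norm_inflation_le (T : E →L[𝕜] E) : ‖inflation n T‖ ≤ ‖T‖ :=
  LinearMap.mkContinuous_norm_le _ (norm_nonneg T) _

end Inflation

variable (π) in
def inflationRep (n : Type) [Fintype n] :
    A →ₙₐ[ℂ] (PiLp 2 (fun _ : n => K) →L[ℂ] PiLp 2 (fun _ : n => K)) where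
  toFun a := inflation n (π a)
  map_smul' c a := by ext; simp
  map_zero' := by ext; simp
  map_add' a b := by ext; simp
  map_mul' a b := by ext; simp

@[simp]
theorem inflationRep_apply (n : Type) [Fintype n] (a : A) (z : PiLp 2 (fun _ : n => K)) (j : n) :
    inflationRep π n a z j = π a (z j) :=
  rfl

theorem IsHilbertRep.inflation [CompleteSpace K] [l.NeBot] (hπ : IsHilbertRep A π)
    (he : IsContractiveLeftApproxUnit l e) (n : Type) [Fintype n] :
    IsHilbertRep A (inflationRep π n) := by
  rw [he.isHilbertRep_iff] at hπ ⊢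
  refine ⟨fun a => (norm_inflation_le n (π a)).trans (hπ.1 a), fun z => ?_⟩
  rw [(PiLp.homeomorph 2 _).isInducing.tendsto_nhds_iff, tendsto_pi_nhds]
  exact fun j => hπ.2 (z j)

theorem IsModuleMap.inflation_comp_eq_comp {T : K →L[ℂ] K}
    (hT : T ∈ (Set.range π).centralizer.centralizer) {n : Type} [Fintype n]
    {W : K →L[ℂ] PiLp 2 (fun _ : n => K)} (hW : IsModuleMap A π (inflationRep π n) W) :
    inflation n T ∘L W = W ∘L T := by
  ext x j
  have hWj : PiLp.proj 2 _ j ∘L W ∈ (Set.range π).centralizer := by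
    rintro _ ⟨a, rfl⟩
    ext y
    simpa using (congr($(hW a y) j)).symm
  simpa using congr($(hT _ hWj) x).symm

variable (π) in
def cyclicSubmodule (ξ : K) : Submodule ℂ K :=
  (LinearMap.range
    ((ContinuousLinearMap.apply ℂ K ξ).toLinearMap ∘ₗ (π : A →ₗ[ℂ] (K →L[ℂ] K)))).topologicalClosure

instance [CompleteSpace K] (ξ : K) : CompleteSpace (cyclicSubmodule π ξ) :=
  Submodule.topologicalClosure.completeSpace _

theorem coe_cyclicSubmodule (ξ : K) :
    (cyclicSubmodule π ξ : Set K) = closure (Set.range fun a => π a ξ) := by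
  rw [cyclicSubmodule, Submodule.topologicalClosure_coe, LinearMap.coe_range]
  rfl

theorem mapsTo_cyclicSubmodule (ξ : K) (a : A) :
    Set.MapsTo (π a) (cyclicSubmodule π ξ) (cyclicSubmodule π ξ) := by
  rw [coe_cyclicSubmodule]
  refine Set.MapsTo.closure ?_ (π a).continuous
  rintro _ ⟨b, rfl⟩
  exact ⟨a * b, by simp [map_mul]⟩

theorem IsHilbertRep.mem_cyclicSubmodule_self [CompleteSpace K] [l.NeBot] (hπ : IsHilbertRep A π)
    (he : IsContractiveLeftApproxUnit l e) (ξ : K) : ξ ∈ cyclicSubmodule π ξ := by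
  rw [← SetLike.mem_coe, coe_cyclicSubmodule]
  exact mem_closure_of_tendsto ((he.isHilbertRep_iff.1 hπ).2 ξ)
    (Eventually.of_forall fun i => ⟨e i, rfl⟩)

variable {H : Type} [NormedAddCommGroup H] [InnerProductSpace ℂ H] [CompleteSpace H]
  {πH : A →ₙₐ[ℂ] (H →L[ℂ] H)}

theorem IsGenerator.dense_span_range [CompleteSpace K] [l.NeBot] (hgen : IsGenerator A πH)
    (he : IsContractiveLeftApproxUnit l e) (hπ : IsHilbertRep A π) :
    Dense (Submodule.span ℂ {x : K | ∃ V : H →L[ℂ] K, IsModuleMap A πH π V ∧ x ∈ Set.range V} :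
      Set K) := by
  set N := (Submodule.span ℂ
    {x : K | ∃ V : H →L[ℂ] K, IsModuleMap A πH π V ∧ x ∈ Set.range V}).topologicalClosure
  have hN : ∀ a, Set.MapsTo (π a) N N := fun a => by
    rw [Submodule.topologicalClosure_coe]
    refine (Submodule.mapsTo_span (f := (π a : K →ₗ[ℂ] K)) ?_).closure (π a).continuous
    rintro _ ⟨V, hV, h, rfl⟩
    exact ⟨V, hV, πH a h, hV a h⟩
  suffices N = ⊤ by rwa [Submodule.dense_iff_topologicalClosure_eq_top]
  by_contra hNtop
  have hR : Nᗮ.orthogonalProjectionOnto ≠ 0 := fun h => hNtop <| by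
    rw [← N.orthogonal_orthogonal, ← Submodule.ker_orthogonalProjectionOnto, h]
    exact LinearMap.ker_zero
  obtain ⟨V, hV, hRV⟩ := hgen K Nᗮ π (compressRep π N hN) hπ (hπ.compress he N hN) _
    (isModuleMap_orthogonalProjectionOnto_compressRep N hN) hR
  refine hRV (ContinuousLinearMap.ext fun h => ?_)
  rw [ContinuousLinearMap.comp_apply, zero_apply,
    Submodule.orthogonalProjectionOnto_eq_zero_iff]
  exact N.le_orthogonal_orthogonal
    (Submodule.le_topologicalClosure _ (Submodule.subset_span ⟨V, hV, h, rfl⟩))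

theorem IsGenerator.inflation_apply_mem_closure [l.NeBot] (hgen : IsGenerator A πH)
    (hrep : IsHilbertRep A πH) (he : IsContractiveLeftApproxUnit l e) {T : H →L[ℂ] H}
    (hT : T ∈ (Set.range πH).centralizer.centralizer) {n : Type} [Fintype n]
    (ξ : PiLp 2 (fun _ : n => H)) :
    inflation n T ξ ∈ closure (Set.range fun a => inflationRep πH n a ξ) := by
  set M := cyclicSubmodule (inflationRep πH n) ξ
  have hinfl := hrep.inflation he n
  have hdense := hgen.dense_span_range he (hinfl.restrict he M (mapsTo_cyclicSubmodule ξ))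
  let N : Submodule ℂ M := M.comap (inflation n T ∘L M.subtypeL).toLinearMap
  have hNclosed : IsClosed (N : Set M) :=
    (Submodule.isClosed_topologicalClosure _).preimage (inflation n T ∘L M.subtypeL).continuous
  suffices hξ : (⟨ξ, hinfl.mem_cyclicSubmodule_self he ξ⟩ : M) ∈ N by
    simpa [N, M, ← coe_cyclicSubmodule] using hξ
  refine closure_minimal (Submodule.span_le.2 ?_) hNclosed (hdense _)
  rintro _ ⟨V, hV, h, rfl⟩
  have hV' : IsModuleMap A πH (inflationRep πH n) (M.subtypeL ∘L V) := fun a x =>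
    congrArg Subtype.val (hV a x)
  show inflation n T (V h) ∈ M
  rw [show inflation n T (V h) = V (T h) from congr($(hV'.inflation_comp_eq_comp hT) h)]
  exact (V (T h)).2

end HilbertModule

theorem mem_closure_of_forall_domRestrict_mem_closure {ι : Type*} {X : ι → Type*}
    [∀ i, TopologicalSpace (X i)] {s : Set (∀ i, X i)} {f : ∀ i, X i}
    (h : ∀ I : Finset ι, (I : Set ι).domRestrict f ∈ closure ((I : Set ι).domRestrict '' s)) :
    f ∈ closure s := by
  refine mem_closure_iff.2 fun U hU hfU => ?_
  obtain ⟨I, u, hu, hIU⟩ := isOpen_pi_iff.1 hU f hfU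
  obtain ⟨_, hgu, g, hg, rfl⟩ := mem_closure_iff.1 (h I) (Set.univ.pi fun i => u i)
    (isOpen_set_pi Set.finite_univ fun i _ => (hu i i.2).1) fun i _ => (hu i i.2).2
  exact ⟨g, hIU fun i hi => hgu ⟨i, hi⟩ trivial, hg⟩

section WeakOperatorTopology

variable {K : Type} [NormedAddCommGroup K] [InnerProductSpace ℂ K]

theorem mem_wotClosure_of_coeFn_mem_closure {S : Set (K →L[ℂ] K)} {T : K →L[ℂ] K}
    (hT : ⇑T ∈ closure ((⇑) '' S : Set (K → K))) : T ∈ wotClosure S := by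
  rw [wotClosure, Set.mem_preimage,
    ContinuousLinearMapWOT.isInducing_inducingFn.closure_eq_preimage_closure_image]
  refine map_mem_closure (f := fun f (p : K × StrongDual ℂ K) => p.2 (f p.1))
    (continuous_pi fun p => p.2.continuous.comp (continuous_apply p.1)) hT ?_
  rintro _ ⟨R, hR, rfl⟩
  exact ⟨_, ⟨R, hR, rfl⟩, rfl⟩

theorem wotClosure_subset_centralizer_centralizer (S : Set (K →L[ℂ] K)) :
    wotClosure S ⊆ S.centralizer.centralizer := by
  intro T hT c hc
  have hsub : ContinuousLinearMapWOT.ofCLM '' S ⊆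
      Set.centralizer {ContinuousLinearMapWOT.ofCLM c} := by
    rintro _ ⟨R, hR, rfl⟩ _ rfl
    exact congrArg ContinuousLinearMapWOT.ofCLM (hc R hR).symm
  exact congrArg ContinuousLinearMapWOT.toCLM
    (closure_minimal hsub (Set.isClosed_centralizer _) hT _ rfl)

end WeakOperatorTopology

theorem generator_double_commutant (hA : HasCAI A)
    (H : Type) [NormedAddCommGroup H] [InnerProductSpace ℂ H] [CompleteSpace H]
    (πH : A →ₙₐ[ℂ] (H →L[ℂ] H)) (hrep : IsHilbertRep A πH) (hgen : IsGenerator A πH) :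
    Set.centralizer (Set.centralizer (Set.range ⇑πH)) = wotClosure (Set.range ⇑πH) := by
  obtain ⟨ι, l, e, _, he_norm, he_tendsto⟩ := hA
  have he : IsContractiveLeftApproxUnit l e := ⟨he_norm, fun a => (he_tendsto a).1⟩
  refine subset_antisymm (fun T hT => ?_) (wotClosure_subset_centralizer_centralizer _)
  refine mem_wotClosure_of_coeFn_mem_closure
    (mem_closure_of_forall_domRestrict_mem_closure fun I => ?_)
  have hI := hgen.inflation_apply_mem_closure hrep he hT (WithLp.toLp 2 fun x : I => (x : H))
  refine map_mem_closure (f := WithLp.ofLp) (PiLp.continuous_ofLp 2 _) hI ?_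
  rintro _ ⟨a, rfl⟩
  exact ⟨_, ⟨πH a, ⟨a, rfl⟩, rfl⟩, rfl⟩
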